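/- arXiv:1802.03000 — 6 statements merged into one kernel-verified Lean document; each statement's English description precedes it below -/
import Mathlib

section
/- If G is a self-complementary simple graph on n vertices with n even, then exactly n/2 vertices of G have degree strictly less than (n-1)/2 (equivalently, degree at most (n-2)/2). -/
/-!
An isomorphism `σ : G ≃g Gᶜ` satisfies `deg σ(v) = n - 1 - deg v`. Since `n - 1` is odd, no vertex
has degree exactly `(n - 1)/2`, so `σ` exchanges the vertices of small degree with those of large
degree, and each of the two classes contains half of the vertices.
-/

open Finset

theorem Fintype.card_filter_eq_card_div_two_of_equiv {α : Type*} [Fintype α] {p : α → Prop}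
    [DecidablePred p] (e : α ≃ α) (he : ∀ a, p (e a) ↔ ¬p a) :
    #(univ.filter p) = Fintype.card α / 2 := by
  have hswap : #(univ.filter fun a => ¬p a) = #(univ.filter p) :=
    Finset.card_equiv e fun a => by simp [he]
  have hsum := card_filter_add_card_filter_not (s := univ) p
  rw [card_univ] at hsum
  omega

namespace SimpleGraph

variable {V : Type*} [Fintype V] {G : SimpleGraph V} [DecidableRel G.Adj]

theorem degree_add_degree_of_iso_compl (f : G ≃g Gᶜ) (v : V) :
    G.degree v + G.degree (f v) = Fintype.card V - 1 := by
  classical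
  have hcompl : Gᶜ.degree (f v) = Fintype.card V - 1 - G.degree (f v) := G.degree_compl (f v)
  have hlt : G.degree (f v) < Fintype.card V := G.degree_lt_card_verts (f v)
  rw [f.degree_eq] at hcompl
  omega

theorem two_mul_degree_lt_iff_of_iso_compl (f : G ≃g Gᶜ) (heven : Even (Fintype.card V))
    (v : V) :
    2 * G.degree (f v) < Fintype.card V - 1 ↔ ¬2 * G.degree v < Fintype.card V - 1 := by
  have hsum := degree_add_degree_of_iso_compl f v
  have hpos : 0 < Fintype.card V := Fintype.card_pos_iff.mpr ⟨v⟩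
  obtain ⟨k, hk⟩ := heven
  omega

end SimpleGraph

theorem stmt3_general {V : Type*} [Fintype V] (G : SimpleGraph V)
    [DecidableRel G.Adj] (hsc : Nonempty (G ≃g Gᶜ)) (heven : Even (Fintype.card V)) :
    (Finset.univ.filter fun v => 2 * G.degree v < Fintype.card V - 1).card
      = Fintype.card V / 2 := by
  obtain ⟨f⟩ := hsc
  exact Fintype.card_filter_eq_card_div_two_of_equiv f.toEquiv
    (SimpleGraph.two_mul_degree_lt_iff_of_iso_compl f heven)

/-- if `G` is self-complementary on an even number `n` of vertices, then exactly
`n / 2` vertices have degree strictly less than `(n-1)/2`, i.e. satisfy `2 deg v < n - 1`. -/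
theorem stmt3 {V : Type*} [Fintype V] [DecidableEq V] (G : SimpleGraph V)
    [DecidableRel G.Adj] (hsc : Nonempty (G ≃g Gᶜ)) (heven : Even (Fintype.card V)) :
    (Finset.univ.filter fun v => 2 * G.degree v < Fintype.card V - 1).card
      = Fintype.card V / 2 :=
  stmt3_general G hsc heven
end

section
/- Let X be a self-complementary graph on vertex set R with isomorphism σ : X ≅ Xᶜ, and let q ≥ 1. Define G on vertex set R ⊔ A ⊔ B ⊔ C ⊔ D, where A, C each carry a complete graph K_q, B, D each carry an empty graph E_q, with complete joins A–B, B–R, R–D, D–C, C–A (all edges between the indicated parts), and no other edges. Then G is self-complementary. -/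
/-- `G` has a complete minor of order `m`: there are `m` pairwise disjoint, nonempty,
connected branch sets with an edge of `G` between any two of them. -/
def HasCliqueMinor {V : Type*} (G : SimpleGraph V) (m : ℕ) : Prop :=
  ∃ B : Fin m → Set V,
    (∀ i, (B i).Nonempty) ∧
    (∀ i, (G.induce (B i)).Connected) ∧
    (Pairwise fun i j => Disjoint (B i) (B j)) ∧
    ∀ i j, i ≠ j → ∃ x ∈ B i, ∃ y ∈ B j, G.Adj x y

/-- The Hadwiger number: the order of the largest complete minor. -/
noncomputable def hadwiger {V : Type*} (G : SimpleGraph V) : ℕ :=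
  sSup {m | HasCliqueMinor G m}

/-- The 5-part construction: vertex set `R ⊕ Fin 4 × Fin q`, where parts
`0 = A`, `2 = C` carry `K_q`, parts `1 = B`, `3 = D` are edgeless, `R` carries `X`,
with complete joins `A–B`, `B–R`, `R–D`, `D–C`, `C–A`. -/
def fivePart {R : Type*} (X : SimpleGraph R) (q : ℕ) :
    SimpleGraph (R ⊕ Fin 4 × Fin q) :=
  SimpleGraph.fromRel (fun u v =>
    match u, v with
    | Sum.inl x, Sum.inl y => X.Adj x y
    | Sum.inl _, Sum.inr (p, _) => p = 1 ∨ p = 3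
    | Sum.inr (p, _), Sum.inl _ => p = 1 ∨ p = 3
    | Sum.inr (p, _), Sum.inr (p', _) =>
        (p = p' ∧ (p = 0 ∨ p = 2)) ∨
        (p = 0 ∧ p' = 1) ∨ (p = 2 ∧ p' = 0) ∨ (p = 3 ∧ p' = 2))

/-- the 5-part construction applied to a self-complementary graph `X`
(with `q ≥ 1`) yields a self-complementary graph. -/
theorem stmt8 {R : Type*} (X : SimpleGraph R) (hX : Nonempty (X ≃g Xᶜ))
    (q : ℕ) (hq : 1 ≤ q) :
    Nonempty (fivePart X q ≃g (fivePart X q)ᶜ) := by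
  obtain ⟨σ⟩ := hX
  have key : ∀ a b : R, a ≠ b → (X.Adj a b ↔ ¬ X.Adj (σ a) (σ b)) := by
    intro a b hab
    have h := (σ.map_rel_iff (a := a) (b := b)).symm
    rw [SimpleGraph.compl_adj] at h
    constructor
    · intro hadj; exact (h.mp hadj).2
    · intro hn; exact h.mpr ⟨fun e => hab (σ.injective e), hn⟩
  refine ⟨⟨Equiv.sumCongr σ.toEquiv
    (Equiv.prodCongr (Equiv.addRight (1 : Fin 4)) (Equiv.refl _)), ?_⟩⟩
  rintro (x | ⟨p, i⟩) (y | ⟨p', j⟩) <;>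
    simp only [Equiv.sumCongr_apply, Sum.map_inl, Sum.map_inr, Equiv.prodCongr_apply,
      Prod.map, Equiv.coe_addRight, Equiv.refl_apply, fivePart, SimpleGraph.compl_adj,
      SimpleGraph.fromRel_adj, ne_eq, Sum.inl.injEq, Sum.inr.injEq, Prod.mk.injEq,
      RelIso.coe_fn_toEquiv]
  · constructor
    · rintro ⟨hne, hn⟩
      have hxy : x ≠ y := fun e => hne (by rw [e])
      have hna : ¬ X.Adj (σ x) (σ y) := fun h => hn ⟨hne, Or.inl h⟩
      exact ⟨hxy, Or.inl ((key x y hxy).mpr hna)⟩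
    · rintro ⟨hxy, hadj⟩
      have hadj' : X.Adj x y := hadj.elim id fun h => h.symm
      have hne : ¬ σ x = σ y := fun e => hxy (σ.injective e)
      refine ⟨hne, fun hc => ?_⟩
      rcases hc.2 with h | h
      · exact (key x y hxy).mp hadj' h
      · exact (key y x (Ne.symm hxy)).mp hadj'.symm h
  · fin_cases p' <;> simp_all
  · fin_cases p <;> simp_all
  · fin_cases p <;> fin_cases p' <;> simp_all
end

section
/- Let G be the graph on vertex set R ⊔ A ⊔ B ⊔ C ⊔ D with |R| = r, |A| = |C| = q (each inducing K_q), |B| = |D| = q (each edgeless), and complete joins A–B, B–R, R–D, D–C, C–A. Then G has a complete minor of order 2q + min(q, r). -/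
lemma aux_connected_induce_singleton {V : Type*} (G : SimpleGraph V) (a : V) :
    (G.induce {a}).Connected := by
  rw [SimpleGraph.connected_iff]
  refine ⟨fun u w => ?_, ⟨⟨a, rfl⟩⟩⟩
  have : u = w := Subtype.ext (u.2.trans w.2.symm)
  rw [this]

lemma aux_connected_induce_triple {V : Type*} {G : SimpleGraph V} {a b c : V}
    (hab : G.Adj a b) (hbc : G.Adj b c) :
    (G.induce {a, b, c}).Connected := by
  have ha : a ∈ ({a,b,c} : Set V) := by simp
  have hb : b ∈ ({a,b,c} : Set V) := by simp
  rw [SimpleGraph.connected_iff]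
  refine ⟨?_, ⟨⟨a, ha⟩⟩⟩
  have key : ∀ v : ({a,b,c} : Set V), (G.induce {a,b,c}).Reachable v ⟨b, hb⟩ := by
    rintro ⟨v, hv⟩
    simp only [Set.mem_insert_iff, Set.mem_singleton_iff] at hv
    rcases hv with rfl | rfl | rfl
    · exact SimpleGraph.Adj.reachable (by simpa using hab)
    · rfl
    · exact SimpleGraph.Adj.reachable (by simpa using hbc.symm)
  intro u w
  exact (key u).trans (key w).symm

def branchSets {R : Type*} {q m : ℕ} (hmq : m ≤ q) (f : Fin m → R) :
    Fin q ⊕ Fin q ⊕ Fin m → Set (R ⊕ Fin 4 × Fin q)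
  | Sum.inl i => {Sum.inr (0, i)}
  | Sum.inr (Sum.inl i) => {Sum.inr (2, i)}
  | Sum.inr (Sum.inr i) =>
      {Sum.inr (1, Fin.castLE hmq i), Sum.inl (f i), Sum.inr (3, Fin.castLE hmq i)}

lemma aux_minor_of_equiv {V : Type*} {I : Type*} {m : ℕ} (G : SimpleGraph V)
    (e : Fin m ≃ I) (F : I → Set V)
    (h1 : ∀ i, (F i).Nonempty) (h2 : ∀ i, (G.induce (F i)).Connected)
    (h3 : Pairwise fun i j => Disjoint (F i) (F j))
    (h4 : ∀ i j, i ≠ j → ∃ x ∈ F i, ∃ y ∈ F j, G.Adj x y) :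
    HasCliqueMinor G m :=
  ⟨fun i => F (e i), fun _ => h1 _, fun _ => h2 _,
    fun _ _ hij => h3 (e.injective.ne hij), fun _ _ hij => h4 _ _ (e.injective.ne hij)⟩

/-- the 5-part graph on `R ⊕ A ⊕ B ⊕ C ⊕ D` with `|R| = r` has a complete
minor of order `2q + min q r`. -/
theorem stmt9 {R : Type*} [Fintype R] (X : SimpleGraph R) (q r : ℕ)
    (hr : Fintype.card R = r) :
    HasCliqueMinor (fivePart X q) (2 * q + min q r) := by
  classical
  have hmq : min q r ≤ q := min_le_left q r
  obtain ⟨f⟩ : Nonempty (Fin (min q r) ↪ R) :=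
    Function.Embedding.nonempty_of_card_le (by simp [hr, min_le_right q r])
  have e : Fin (2 * q + min q r) ≃ (Fin q ⊕ Fin q ⊕ Fin (min q r)) :=
    (finCongr (by omega)).trans (finSumFinEquiv.symm.trans
      ((Equiv.refl (Fin q)).sumCongr finSumFinEquiv.symm))
  refine aux_minor_of_equiv _ e (branchSets hmq f) ?_ ?_ ?_ ?_
  · rintro (i | i | i) <;> simp [branchSets]
  · rintro (i | i | i)
    · exact aux_connected_induce_singleton _ _
    · exact aux_connected_induce_singleton _ _
    · exact aux_connected_induce_triple
        (by simp [fivePart, SimpleGraph.fromRel_adj])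
        (by simp [fivePart, SimpleGraph.fromRel_adj])
  · rintro (i | i | i) (j | j | j) hne <;>
      simp only [branchSets, Set.disjoint_left, Set.mem_insert_iff,
        Set.mem_singleton_iff] <;>
      rintro x (rfl | rfl | rfl) <;> simp_all [Fin.castLE_injective hmq |>.ne_iff,
        f.injective.ne_iff]
  · have hBR : ∀ (i : Fin q) (x : R), (fivePart X q).Adj (Sum.inr (1, i)) (Sum.inl x) := by
      intro i x; simp [fivePart, SimpleGraph.fromRel_adj]
    rintro (i | i | i) (j | j | j) hne
    · refine ⟨Sum.inr (0, i), by simp [branchSets],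
        Sum.inr (0, j), by simp [branchSets], ?_⟩
      have : i ≠ j := by simpa using hne
      simp [fivePart, SimpleGraph.fromRel_adj, this]
    · exact ⟨Sum.inr (0, i), by simp [branchSets], Sum.inr (2, j), by simp [branchSets],
        by simp [fivePart, SimpleGraph.fromRel_adj]⟩
    · refine ⟨Sum.inr (0, i), by simp [branchSets],
        Sum.inr (1, Fin.castLE hmq j), by simp [branchSets], ?_⟩
      simp [fivePart, SimpleGraph.fromRel_adj]
    · exact ⟨Sum.inr (2, i), by simp [branchSets], Sum.inr (0, j), by simp [branchSets],
        by simp [fivePart, SimpleGraph.fromRel_adj]⟩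
    · refine ⟨Sum.inr (2, i), by simp [branchSets],
        Sum.inr (2, j), by simp [branchSets], ?_⟩
      have : i ≠ j := by simpa using hne
      simp [fivePart, SimpleGraph.fromRel_adj, this]
    · refine ⟨Sum.inr (2, i), by simp [branchSets],
        Sum.inr (3, Fin.castLE hmq j), by simp [branchSets], ?_⟩
      simp [fivePart, SimpleGraph.fromRel_adj]
    · exact ⟨Sum.inr (1, Fin.castLE hmq i), by simp [branchSets],
        Sum.inr (0, j), by simp [branchSets],
        by simp [fivePart, SimpleGraph.fromRel_adj]⟩
    · exact ⟨Sum.inr (3, Fin.castLE hmq i), by simp [branchSets],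
        Sum.inr (2, j), by simp [branchSets],
        by simp [fivePart, SimpleGraph.fromRel_adj]⟩
    · exact ⟨Sum.inr (1, Fin.castLE hmq i), by simp [branchSets],
        Sum.inl (f j), by simp [branchSets], hBR _ _⟩
end

section
/- There exists a self-complementary graph on 12 vertices that has a K_7 minor; in particular, for n = 12 the upper bound ⌊3n/5⌋ = 7 on the Hadwiger number of a self-complementary graph is attained. -/
/-!
Join `i ∈ Fin 12` to `i + 1, i + 2, i + 3` when `i` is even and to `i + 4, i + 5, i + 6` when `i`
is odd. Rotating by one flips every parity, hence swaps the two sets of differences, so it maps the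
graph onto its complement. Seven disjoint cliques of size at most two, pairwise joined by an edge,
serve as branch sets of a `K₇` minor.
-/

open SimpleGraph

lemma SimpleGraph.IsClique.induce_connected {V : Type*} {G : SimpleGraph V} {s : Set V}
    (hs : G.IsClique s) (hne : s.Nonempty) : (G.induce s).Connected := by
  have := hne.to_subtype
  refine ⟨fun a b => ?_⟩
  by_cases hab : a = b
  · exact hab ▸ .rfl
  · exact Adj.reachable (G := G.induce s) (hs a.2 b.2 (Subtype.coe_ne_coe.mpr hab))

lemma hasCliqueMinor_of_isClique {V : Type*} {G : SimpleGraph V} {m : ℕ} (B : Fin m → Finset V)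
    (hne : ∀ i, (B i).Nonempty) (hclique : ∀ i, G.IsClique (B i : Set V))
    (hdisj : ∀ i j, i ≠ j → Disjoint (B i) (B j))
    (hadj : ∀ i j, i ≠ j → ∃ x ∈ B i, ∃ y ∈ B j, G.Adj x y) : HasCliqueMinor G m :=
  ⟨fun i => B i, fun i => (hne i).to_set, fun i => (hclique i).induce_connected (hne i).to_set,
    fun i j hij => Finset.disjoint_coe.mpr (hdisj i j hij), by simpa using hadj⟩

def sc12 : SimpleGraph (Fin 12) :=
  fromRel fun i j => (j - i).val ∈ (if i.val % 2 = 0 then ({1, 2, 3} : Finset ℕ) else {4, 5, 6})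

instance : DecidableRel sc12.Adj := fun i j => by unfold sc12; infer_instance

theorem sc12_compl_adj_add_one_iff : ∀ i j : Fin 12, sc12ᶜ.Adj (i + 1) (j + 1) ↔ sc12.Adj i j := by
  decide

def sc12IsoCompl : sc12 ≃g sc12ᶜ :=
  ⟨Equiv.addRight 1, sc12_compl_adj_add_one_iff _ _⟩

def sc12BranchSets : Fin 7 → Finset (Fin 12) :=
  ![{0, 2}, {1, 7}, {3, 11}, {4, 6}, {5}, {8, 10}, {9}]

theorem sc12_hasCliqueMinor_seven : HasCliqueMinor sc12 7 :=
  hasCliqueMinor_of_isClique sc12BranchSets (by decide) (by decide) (by decide) (by decide)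

/-- there is a self-complementary graph on `12` vertices with a `K₇` minor,
attaining the upper bound `⌊3 · 12 / 5⌋ = 7`. -/
theorem stmt11 :
    ∃ G : SimpleGraph (Fin 12), Nonempty (G ≃g Gᶜ) ∧ HasCliqueMinor G 7 :=
  ⟨sc12, ⟨sc12IsoCompl⟩, sc12_hasCliqueMinor_seven⟩
end

section
/- Let G be a self-complementary graph on n vertices with Hadwiger number k. Then the graph G' obtained from the 5-part construction with X_r = G and q = 1 (adding vertices a₁, a₂, a₃, a₄ with a₁a₃ an edge, complete joins a₁–a₂, a₂–V(G), V(G)–a₄, a₄–a₃, a₃–a₁) is a self-complementary graph on n + 4 vertices with Hadwiger number at least k + 2. -/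
section Aux

open SimpleGraph

variable {V : Type*}

lemma adj_ll (G : SimpleGraph V) (x y : V) :
    (fivePart G 1).Adj (Sum.inl x) (Sum.inl y) ↔ G.Adj x y := by
  simp only [fivePart, SimpleGraph.fromRel_adj]
  exact ⟨fun h => h.2.elim id fun h' => h'.symm, fun h => ⟨by simpa using h.ne, Or.inl h⟩⟩

lemma adj_lr (G : SimpleGraph V) (x : V) (p : Fin 4) (i : Fin 1) :
    (fivePart G 1).Adj (Sum.inl x) (Sum.inr (p, i)) ↔ (p = 1 ∨ p = 3) := by
  simp [fivePart, SimpleGraph.fromRel_adj]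

lemma adj_rr (G : SimpleGraph V) (p p' : Fin 4) (i j : Fin 1) :
    (fivePart G 1).Adj (Sum.inr (p, i)) (Sum.inr (p', j)) ↔
      ((p = 0 ∧ p' = 1) ∨ (p = 1 ∧ p' = 0) ∨ (p = 0 ∧ p' = 2) ∨ (p = 2 ∧ p' = 0)
        ∨ (p = 2 ∧ p' = 3) ∨ (p = 3 ∧ p' = 2)) := by
  simp only [fivePart, SimpleGraph.fromRel_adj, ne_eq, Sum.inr.injEq, Prod.mk.injEq]
  fin_cases i <;> fin_cases j <;> fin_cases p <;> fin_cases p' <;> decide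

lemma adj_rl (G : SimpleGraph V) (x : V) (p : Fin 4) (i : Fin 1) :
    (fivePart G 1).Adj (Sum.inr (p, i)) (Sum.inl x) ↔ (p = 1 ∨ p = 3) := by
  rw [SimpleGraph.adj_comm]; exact adj_lr G x p i

def fivePart_selfcompl (G : SimpleGraph V) (e : G ≃g Gᶜ) :
    fivePart G 1 ≃g (fivePart G 1)ᶜ := by
  refine ⟨Equiv.sumCongr e.toEquiv
    (Equiv.prodCongr ⟨fun p => p + 3, fun p => p + 1, by decide, by decide⟩
      (Equiv.refl (Fin 1))), ?_⟩
  rintro (x | ⟨p, i⟩) (y | ⟨p', j⟩)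
  · show (fivePart G 1)ᶜ.Adj (Sum.inl (e x)) (Sum.inl (e y)) ↔ _
    rw [SimpleGraph.compl_adj, adj_ll, adj_ll]
    constructor
    · rintro ⟨hne, hna⟩
      exact e.map_rel_iff.mp ((SimpleGraph.compl_adj _ _ _).mpr ⟨by simpa using hne, hna⟩)
    · intro h
      have h2 := (SimpleGraph.compl_adj _ _ _).mp (e.map_rel_iff.mpr h)
      exact ⟨by simpa using h2.1, h2.2⟩
  · show (fivePart G 1)ᶜ.Adj (Sum.inl (e x)) (Sum.inr (p' + 3, j)) ↔ _
    rw [SimpleGraph.compl_adj, adj_lr, adj_lr]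
    simp only [ne_eq, reduceCtorEq, not_false_eq_true, true_and]
    revert p'; decide
  · show (fivePart G 1)ᶜ.Adj (Sum.inr (p + 3, i)) (Sum.inl (e y)) ↔ _
    rw [SimpleGraph.compl_adj, adj_rl, adj_rl]
    simp only [ne_eq, reduceCtorEq, not_false_eq_true, true_and]
    revert p; decide
  · show (fivePart G 1)ᶜ.Adj (Sum.inr (p + 3, i)) (Sum.inr (p' + 3, j)) ↔ _
    rw [SimpleGraph.compl_adj, adj_rr, adj_rr]
    simp only [ne_eq, Sum.inr.injEq, Prod.mk.injEq]
    revert p p' i j; decide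

lemma minor_le_card [Fintype V] {G : SimpleGraph V} {m : ℕ}
    (h : HasCliqueMinor G m) : m ≤ Fintype.card V := by
  obtain ⟨B, hne, -, hdis, -⟩ := h
  choose x hx using hne
  have hinj : Function.Injective x := by
    intro i j hij
    by_contra hne'
    exact Set.disjoint_left.mp (hdis hne') (hx i) (hij ▸ hx j)
  simpa using Fintype.card_le_of_injective x hinj

lemma minor_zero (G : SimpleGraph V) : HasCliqueMinor G 0 :=
  ⟨Fin.elim0, fun i => i.elim0, fun i => i.elim0, fun i => i.elim0, fun i => i.elim0⟩

lemma minor_hadwiger [Fintype V] (G : SimpleGraph V) : HasCliqueMinor G (hadwiger G) :=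
  Nat.sSup_mem ⟨0, by exact minor_zero G⟩ ⟨Fintype.card V, fun _ hm => minor_le_card hm⟩

lemma pair_conn {G : SimpleGraph V} {x y : V} (h : G.Adj x y) :
    (G.induce {x, y}).Connected := by
  rw [SimpleGraph.connected_iff]
  have hxy : x ∈ ({x, y} : Set V) := by simp
  have hy : y ∈ ({x, y} : Set V) := by simp
  have hr : (G.induce {x, y}).Reachable ⟨x, hxy⟩ ⟨y, hy⟩ :=
    SimpleGraph.Adj.reachable (by simpa using h)
  refine ⟨?_, ⟨⟨x, hxy⟩⟩⟩
  rintro ⟨u, hu⟩ ⟨v, hv⟩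
  simp only [Set.mem_insert_iff, Set.mem_singleton_iff] at hu hv
  rcases hu with rfl | rfl <;> rcases hv with rfl | rfl
  · rfl
  · exact hr
  · exact hr.symm
  · rfl

lemma inl_image_conn {G : SimpleGraph V} {s : Set V} (h : (G.induce s).Connected) :
    ((fivePart G 1).induce (Sum.inl '' s)).Connected := by
  have e : G.induce s ≃g (fivePart G 1).induce (Sum.inl '' s) :=
    { toEquiv := Equiv.Set.image Sum.inl s Sum.inl_injective
      map_rel_iff' := by
        rintro ⟨a, ha⟩ ⟨b, hb⟩
        simp [Equiv.Set.image, Equiv.Set.imageOfInjOn, SimpleGraph.comap_adj, adj_ll] }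
  exact e.connected_iff.mp h

end Aux

/-- applying the 5-part construction with `q = 1` to a self-complementary
graph `G` on `n` vertices of Hadwiger number `k` gives a self-complementary graph on
`n + 4` vertices of Hadwiger number at least `k + 2`. -/
theorem stmt14 {V : Type*} [Fintype V] (G : SimpleGraph V) (n k : ℕ)
    (hn : Fintype.card V = n) (hsc : Nonempty (G ≃g Gᶜ)) (hk : hadwiger G = k) :
    Fintype.card (V ⊕ Fin 4 × Fin 1) = n + 4 ∧
    Nonempty (fivePart G 1 ≃g (fivePart G 1)ᶜ) ∧
    k + 2 ≤ hadwiger (fivePart G 1) := by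
  obtain ⟨e⟩ := hsc
  refine ⟨by simp [hn], ⟨?_⟩, ?_⟩
  · exact fivePart_selfcompl G e
  · -- Hadwiger bound
    have hmk : HasCliqueMinor G k := hk ▸ minor_hadwiger G
    obtain ⟨B, h1, h2, h3, h4⟩ := hmk
    set a : Fin 4 → V ⊕ Fin 4 × Fin 1 := fun p => Sum.inr (p, 0) with ha
    have tri : ∀ i : Fin (k + 2), (i : ℕ) < k ∨ (i : ℕ) = k ∨ (i : ℕ) = k + 1 := by
      intro i; omega
    have hmem : HasCliqueMinor (fivePart G 1) (k + 2) := by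
      refine ⟨fun i => if h : (i : ℕ) < k then Sum.inl '' B ⟨i, h⟩
        else if (i : ℕ) = k then {a 1, a 0} else {a 3, a 2}, ?_, ?_, ?_, ?_⟩
      · intro i
        dsimp only
        rcases tri i with hi | hi | hi
        · rw [dif_pos hi]; exact (h1 ⟨i, hi⟩).image _
        · rw [dif_neg (by omega : ¬ (i : ℕ) < k), if_pos hi]; exact ⟨a 1, by simp⟩
        · rw [dif_neg (by omega : ¬ (i : ℕ) < k), if_neg (by omega)]; exact ⟨a 3, by simp⟩
      · intro i
        dsimp only
        rcases tri i with hi | hi | hi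
        · rw [dif_pos hi]; exact inl_image_conn (h2 ⟨i, hi⟩)
        · rw [dif_neg (by omega : ¬ (i : ℕ) < k), if_pos hi]
          exact pair_conn (by rw [ha, adj_rr]; tauto)
        · rw [dif_neg (by omega : ¬ (i : ℕ) < k), if_neg (by omega)]
          exact pair_conn (by rw [ha, adj_rr]; tauto)
      · intro i j hij
        dsimp only
        have hIJ : ∀ (hi : (i : ℕ) < k) (hj : (j : ℕ) < k),
            (⟨(i : ℕ), hi⟩ : Fin k) ≠ ⟨(j : ℕ), hj⟩ := by
          intro hi hj h
          apply hij
          rw [Fin.ext_iff] at h ⊢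
          exact h
        have hd1 : ∀ (s : Set V) (p p' : Fin 4),
            Disjoint (Sum.inl '' s) ({a p, a p'} : Set (V ⊕ Fin 4 × Fin 1)) := by
          intro s p p'
          rw [Set.disjoint_left]
          rintro _ ⟨x, -, rfl⟩ hx
          simp [ha] at hx
        have hd2 : Disjoint ({a 1, a 0} : Set (V ⊕ Fin 4 × Fin 1)) {a 3, a 2} := by
          rw [ha, Set.disjoint_left]
          rintro x (rfl | rfl) h <;>
            simp only [Set.mem_insert_iff, Set.mem_singleton_iff, Sum.inr.injEq,
              Prod.mk.injEq] at h <;>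
            rcases h with ⟨h, -⟩ | ⟨h, -⟩ <;> exact absurd h (by decide)
        rcases tri i with hi | hi | hi <;> rcases tri j with hj | hj | hj
        · rw [dif_pos hi, dif_pos hj]
          exact (Set.disjoint_image_iff Sum.inl_injective).mpr (h3 (hIJ hi hj))
        · rw [dif_pos hi, dif_neg (by omega : ¬ (j : ℕ) < k), if_pos hj]
          exact hd1 _ _ _
        · rw [dif_pos hi, dif_neg (by omega : ¬ (j : ℕ) < k), if_neg (by omega)]
          exact hd1 _ _ _
        · rw [dif_neg (by omega : ¬ (i : ℕ) < k), if_pos hi, dif_pos hj]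
          exact (hd1 _ _ _).symm
        · exact absurd (Fin.ext (hi.trans hj.symm)) hij
        · rw [dif_neg (by omega : ¬ (i : ℕ) < k), if_pos hi,
            dif_neg (by omega : ¬ (j : ℕ) < k), if_neg (by omega)]
          exact hd2
        · rw [dif_neg (by omega : ¬ (i : ℕ) < k), if_neg (by omega), dif_pos hj]
          exact (hd1 _ _ _).symm
        · rw [dif_neg (by omega : ¬ (i : ℕ) < k), if_neg (by omega),
            dif_neg (by omega : ¬ (j : ℕ) < k), if_pos hj]
          exact hd2.symm
        · exact absurd (Fin.ext (hi.trans hj.symm)) hij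
      · intro i j hij
        dsimp only
        have hBa : ∀ (m : Fin k) (p : Fin 4), p = 1 ∨ p = 3 →
            ∃ x ∈ Sum.inl '' B m, (fivePart G 1).Adj x (a p) := by
          intro m p hp
          obtain ⟨x, hx⟩ := h1 m
          exact ⟨Sum.inl x, Set.mem_image_of_mem _ hx, by rw [ha, adj_lr]; exact hp⟩
        rcases tri i with hi | hi | hi <;> rcases tri j with hj | hj | hj
        · rw [dif_pos hi, dif_pos hj]
          obtain ⟨x, hx, y, hy, hadj⟩ := h4 ⟨i, hi⟩ ⟨j, hj⟩
            (by rintro h; apply hij; rw [Fin.ext_iff] at h ⊢; exact h)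
          exact ⟨Sum.inl x, Set.mem_image_of_mem _ hx, Sum.inl y,
            Set.mem_image_of_mem _ hy, (adj_ll G x y).mpr hadj⟩
        · rw [dif_pos hi, dif_neg (by omega : ¬ (j : ℕ) < k), if_pos hj]
          obtain ⟨x, hx, hadj⟩ := hBa ⟨i, hi⟩ 1 (Or.inl rfl)
          exact ⟨x, hx, a 1, by simp, hadj⟩
        · rw [dif_pos hi, dif_neg (by omega : ¬ (j : ℕ) < k), if_neg (by omega)]
          obtain ⟨x, hx, hadj⟩ := hBa ⟨i, hi⟩ 3 (Or.inr rfl)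
          exact ⟨x, hx, a 3, by simp, hadj⟩
        · rw [dif_neg (by omega : ¬ (i : ℕ) < k), if_pos hi, dif_pos hj]
          obtain ⟨x, hx, hadj⟩ := hBa ⟨j, hj⟩ 1 (Or.inl rfl)
          exact ⟨a 1, by simp, x, hx, hadj.symm⟩
        · exact absurd (Fin.ext (hi.trans hj.symm)) hij
        · rw [dif_neg (by omega : ¬ (i : ℕ) < k), if_pos hi,
            dif_neg (by omega : ¬ (j : ℕ) < k), if_neg (by omega)]
          exact ⟨a 0, by simp, a 2, by simp, by rw [ha, adj_rr]; tauto⟩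
        · rw [dif_neg (by omega : ¬ (i : ℕ) < k), if_neg (by omega), dif_pos hj]
          obtain ⟨x, hx, hadj⟩ := hBa ⟨j, hj⟩ 3 (Or.inr rfl)
          exact ⟨a 3, by simp, x, hx, hadj.symm⟩
        · rw [dif_neg (by omega : ¬ (i : ℕ) < k), if_neg (by omega),
            dif_neg (by omega : ¬ (j : ℕ) < k), if_pos hj]
          exact ⟨a 2, by simp, a 0, by simp, by rw [ha, adj_rr]; tauto⟩
        · exact absurd (Fin.ext (hi.trans hj.symm)) hij
    exact le_csSup ⟨Fintype.card (V ⊕ Fin 4 × Fin 1), fun _ hm => minor_le_card hm⟩ hmem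
end

section
/- For every s ≥ 0 there exists a self-complementary graph on 20s + 17 vertices with a complete minor of order 12s + 10 = ⌊3(20s+17)/5⌋. -/
/-!
Take `X` on `4s + 4` vertices to be `s + 1` copies of the path `P₄`, the two endpoints of each
copy being joined to every vertex of all later copies; the antimorphism of `P₄` swapping its
endpoints with its middle vertices extends copywise to an isomorphism `X ≃g Xᶜ` exchanging the
`2s + 2` endpoints with the other vertices. In `fivePart X (4s + 3)` rotate the parts
`A → B → C → D → A` while applying that antimorphism on `X`: this is an isomorphism onto the
complement, and it still is one after adding an apex joined to `A`, `C` and the endpoints of `X`.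

For the minor, fix an endpoint `b` of `X` and match the other `4s + 3` vertices of `X` with the
indices `t` of the parts: the branch sets are the singletons `{Aₜ}`, `{Cₜ}`, the paths
`Bₜ - xₜ - Dₜ` and the edge `{apex, b}`, `3(4s + 3) + 1 = 12s + 10` of them, pairwise adjacent.
-/

open Sum SimpleGraph

namespace SimpleGraph

variable {V W : Type*}

def Iso.compl {G : SimpleGraph V} {H : SimpleGraph W} (f : G ≃g H) : Gᶜ ≃g Hᶜ where
  toEquiv := f.toEquiv
  map_rel_iff' := and_congr f.injective.ne_iff (not_congr f.map_adj_iff)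

lemma induce_triple_connected_of_adj {G : SimpleGraph V} {u v w : V} (huv : G.Adj u v)
    (hvw : G.Adj v w) : (G.induce {u, v, w}).Connected := by
  rw [Set.insert_eq]
  exact connected_induce_union (by simp) (induce_pair_connected_of_adj hvw).preconnected
    rfl (by simp) huv

def addVertex (G : SimpleGraph V) (S : Set V) : SimpleGraph (Option V) where
  Adj
    | none, none => False
    | none, some v => v ∈ S
    | some u, none => u ∈ S
    | some u, some v => G.Adj u v
  symm := ⟨by rintro (_ | u) (_ | v) h <;> first | exact h | exact h.symm⟩
  loopless := ⟨by rintro (_ | u) h <;> first | exact h | exact G.loopless.irrefl u h⟩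

section AddVertex

variable {G : SimpleGraph V} {S : Set V}

@[simp] lemma addVertex_adj_none_some (v : V) : (G.addVertex S).Adj none (some v) ↔ v ∈ S := .rfl

@[simp] lemma addVertex_adj_some_none (v : V) : (G.addVertex S).Adj (some v) none ↔ v ∈ S := .rfl

@[simp] lemma addVertex_adj_some_some (u v : V) :
    (G.addVertex S).Adj (some u) (some v) ↔ G.Adj u v := .rfl

def addVertexComplIso (σ : G ≃g Gᶜ) (hS : ∀ v, σ v ∈ S ↔ v ∉ S) :
    G.addVertex S ≃g (G.addVertex S)ᶜ where
  toEquiv := Equiv.optionCongr σ.toEquiv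
  map_rel_iff' := by
    rintro (_ | u) (_ | v)
    · simp [addVertex]
    · simp [hS]
    · simp [hS]
    · simpa using σ.map_adj_iff (v := u) (w := v)

end AddVertex

def copiesChain (H : SimpleGraph W) (E : Set W) (ι : Type*) [LinearOrder ι] :
    SimpleGraph (ι × W) where
  Adj x y := (x.1 = y.1 ∧ H.Adj x.2 y.2) ∨ (x.1 < y.1 ∧ x.2 ∈ E) ∨ (y.1 < x.1 ∧ y.2 ∈ E)
  symm := ⟨by
    rintro x y (⟨h, h'⟩ | h | h)
    · exact .inl ⟨h.symm, h'.symm⟩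
    · exact .inr (.inr h)
    · exact .inr (.inl h)⟩
  loopless := ⟨by
    rintro x (⟨-, h⟩ | ⟨h, -⟩ | ⟨h, -⟩)
    · exact H.loopless.irrefl _ h
    · exact lt_irrefl _ h
    · exact lt_irrefl _ h⟩

def copiesChainComplIso {H : SimpleGraph W} {E : Set W} {ι : Type*} [LinearOrder ι]
    (τ : H ≃g Hᶜ) (hE : ∀ k, τ k ∈ E ↔ k ∉ E) :
    copiesChain H E ι ≃g (copiesChain H E ι)ᶜ where
  toEquiv := (Equiv.refl ι).prodCongr τ.toEquiv
  map_rel_iff' := by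
    rintro ⟨i, k⟩ ⟨j, l⟩
    rcases lt_trichotomy i j with h | rfl | h
    · simp [copiesChain, h, h.ne, h.not_gt, hE]
    · simpa [copiesChain] using τ.map_adj_iff (v := k) (w := l)
    · simp [copiesChain, h, h.ne', h.not_gt, hE]

/-- `0 ↦ 1 ↦ 3 ↦ 2 ↦ 0` maps the path `0 - 1 - 2 - 3` onto its complement `1 - 3 - 0 - 2`. -/
def pathGraphFourComplIso : pathGraph 4 ≃g (pathGraph 4)ᶜ where
  toEquiv := ⟨![1, 3, 0, 2], ![2, 0, 3, 1], by decide, by decide⟩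
  map_rel_iff' := by
    intro a b
    simp only [compl_adj, pathGraph_adj, Equiv.coe_fn_mk]
    revert a b
    decide

end SimpleGraph

section CliqueMinor

variable {V W : Type*} {G : SimpleGraph V}

lemma hasCliqueMinor_card_of_branchSets {J : Type*} [Fintype J] (B : J → Set V)
    (hne : ∀ j, (B j).Nonempty) (hconn : ∀ j, (G.induce (B j)).Connected)
    (hdisj : Pairwise fun i j => Disjoint (B i) (B j))
    (hadj : ∀ i j, i ≠ j → ∃ x ∈ B i, ∃ y ∈ B j, G.Adj x y) :
    HasCliqueMinor G (Fintype.card J) :=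
  ⟨B ∘ (Fintype.equivFin J).symm, fun _ => hne _, fun _ => hconn _,
    fun _ _ h => hdisj ((Fintype.equivFin J).symm.injective.ne h),
    fun _ _ h => hadj _ _ ((Fintype.equivFin J).symm.injective.ne h)⟩

lemma HasCliqueMinor.map {H : SimpleGraph W} {m : ℕ} (f : G.Copy H) (hG : HasCliqueMinor G m) :
    HasCliqueMinor H m := by
  obtain ⟨B, hne, hconn, hdisj, hadj⟩ := hG
  refine ⟨fun i => f '' B i, fun i => (hne i).image f, fun i => ?_,
    fun i j hij => (Set.disjoint_image_iff f.injective).2 (hdisj hij), fun i j hij => ?_⟩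
  · exact (hconn i).map (induceHom f.toHom (Set.mapsTo_image f (B i)))
      (Set.surjective_mapsTo_image_restrict f (B i))
  · obtain ⟨x, hx, y, hy, hxy⟩ := hadj i j hij
    exact ⟨f x, Set.mem_image_of_mem f hx, f y, Set.mem_image_of_mem f hy, f.toHom.map_adj hxy⟩

end CliqueMinor

section FivePart

variable {R : Type*} {X : SimpleGraph R} {q : ℕ}

/-- The adjacency pattern of `fivePart` between its parts `A, B, C, D = 0, 1, 2, 3`; a loop marks
a clique part. -/
def FivePartJoin (p p' : Fin 4) : Prop :=
  (p = p' ∧ (p = 0 ∨ p = 2)) ∨ (p = 0 ∧ p' = 1) ∨ (p = 1 ∧ p' = 0) ∨ (p = 0 ∧ p' = 2) ∨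
    (p = 2 ∧ p' = 0) ∨ (p = 2 ∧ p' = 3) ∨ (p = 3 ∧ p' = 2)

instance : DecidableRel FivePartJoin := fun _ _ => by unfold FivePartJoin; infer_instance

lemma fivePartJoin_add_one :
    ∀ p p' : Fin 4, FivePartJoin (p + 1) (p' + 1) ↔ ¬FivePartJoin p p' := by
  decide

@[simp] lemma fivePart_adj_inl_inl {x y : R} :
    (fivePart X q).Adj (inl x) (inl y) ↔ X.Adj x y := by
  simpa [fivePart, X.adj_comm y x] using Adj.ne

@[simp] lemma fivePart_adj_inl_inr {x : R} {p : Fin 4} {t : Fin q} :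
    (fivePart X q).Adj (inl x) (inr (p, t)) ↔ p = 1 ∨ p = 3 := by
  simp [fivePart]

@[simp] lemma fivePart_adj_inr_inl {x : R} {p : Fin 4} {t : Fin q} :
    (fivePart X q).Adj (inr (p, t)) (inl x) ↔ p = 1 ∨ p = 3 := by
  simp [fivePart]

@[simp] lemma fivePart_adj_inr_inr {p p' : Fin 4} {t t' : Fin q} :
    (fivePart X q).Adj (inr (p, t)) (inr (p', t')) ↔ (p, t) ≠ (p', t') ∧ FivePartJoin p p' := by
  simp only [fivePart, fromRel_adj, ne_eq, inr.injEq]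
  refine and_congr_right fun h => ?_
  clear h
  revert p p'
  decide

variable (q) in
def fivePartComplIso (σ : X ≃g Xᶜ) : fivePart X q ≃g (fivePart X q)ᶜ where
  toEquiv := σ.toEquiv.sumCongr ((Equiv.addRight 1).prodCongr (Equiv.refl (Fin q)))
  map_rel_iff' := by
    rintro (x | ⟨p, t⟩) (y | ⟨p', t'⟩)
    · simpa using σ.map_adj_iff (v := x) (w := y)
    · simp
      revert p'; decide
    · simp
      revert p; decide
    · simp [fivePartJoin_add_one]
      tauto

def fivePartCone (X : SimpleGraph R) (q : ℕ) (L : Set R) :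
    SimpleGraph (Option (R ⊕ Fin 4 × Fin q)) :=
  (fivePart X q).addVertex (inl '' L ∪ inr '' {v | v.1 = 0 ∨ v.1 = 2})

variable {L : Set R}

variable (q) in
def fivePartConeComplIso (σ : X ≃g Xᶜ) (hL : ∀ x, σ x ∈ L ↔ x ∉ L) :
    fivePartCone X q L ≃g (fivePartCone X q L)ᶜ :=
  addVertexComplIso (fivePartComplIso q σ) <| by
    rintro (x | ⟨p, t⟩)
    · simpa [fivePartComplIso] using hL x
    · simp [fivePartComplIso]
      revert p; decide

lemma hasCliqueMinor_fivePartCone [Fintype R] (hR : Fintype.card R = q + 1) {b : R}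
    (hb : b ∈ L) : HasCliqueMinor (fivePartCone X q L) (3 * q + 1) := by
  classical
  obtain ⟨e⟩ : Nonempty (Fin q ≃ {x // x ≠ b}) :=
    ⟨(Fintype.equivFinOfCardEq (by simp [Fintype.card_subtype_compl, hR])).symm⟩
  let f : Fin q → R := fun t => e t
  have hf : f.Injective := Subtype.val_injective.comp e.injective
  have hfb : ∀ t, f t ≠ b := fun t => (e t).2
  let B : Fin q ⊕ Fin q ⊕ Fin q ⊕ Unit → Set (Option (R ⊕ Fin 4 × Fin q))
    | inl t => {some (inr (0, t))}
    | inr (inl t) => {some (inr (2, t))}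
    | inr (inr (inl t)) => {some (inr (1, t)), some (inl (f t)), some (inr (3, t))}
    | inr (inr (inr ())) => {none, some (inl b)}
  convert hasCliqueMinor_card_of_branchSets B ?_ ?_ ?_ ?_ using 1
  · simp; ring
  · rintro (t | t | t | ⟨⟩) <;> simp [B]
  · rintro (t | t | t | ⟨⟩)
    · simp [B]
    · simp [B]
    · exact induce_triple_connected_of_adj (by simp [fivePartCone]) (by simp [fivePartCone])
    · exact induce_pair_connected_of_adj (by simp [fivePartCone, hb])
  · rintro (i | i | i | ⟨⟩) (j | j | j | ⟨⟩) hij <;>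
      simp_all [B, Set.disjoint_left, hf.eq_iff, (hfb _).symm]
  · rintro (i | i | i | ⟨⟩) (j | j | j | ⟨⟩) hij <;>
      simp_all [B, fivePartCone, FivePartJoin]

end FivePart

/-- for every `s ≥ 0` there is a self-complementary graph on `20s + 17`
vertices with a complete minor of order `12s + 10 = ⌊3(20s+17)/5⌋`. -/
theorem stmt18 (s : ℕ) :
    ∃ G : SimpleGraph (Fin (20 * s + 17)),
      Nonempty (G ≃g Gᶜ) ∧ HasCliqueMinor G (12 * s + 10) ∧
      12 * s + 10 = 3 * (20 * s + 17) / 5 := by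
  let X := copiesChain (pathGraph 4) {0, 3} (Fin (s + 1))
  let L : Set (Fin (s + 1) × Fin 4) := Prod.snd ⁻¹' {0, 3}
  have hE : ∀ k, pathGraphFourComplIso k ∈ ({0, 3} : Set (Fin 4)) ↔ k ∉ ({0, 3} : Set _) := by
    decide
  let σ : X ≃g Xᶜ := copiesChainComplIso pathGraphFourComplIso hE
  have hminor : HasCliqueMinor (fivePartCone X (4 * s + 3) L) (3 * (4 * s + 3) + 1) :=
    hasCliqueMinor_fivePartCone (by simp; ring) (b := (0, 0)) (Or.inl rfl)
  have hcard : Fintype.card (Option (Fin (s + 1) × Fin 4 ⊕ Fin 4 × Fin (4 * s + 3))) =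
      20 * s + 17 := by
    simp; ring
  let φ := Iso.map (Fintype.equivFinOfCardEq hcard) (fivePartCone X (4 * s + 3) L)
  refine ⟨_, ⟨φ.symm.trans ((fivePartConeComplIso _ σ fun x => hE x.2).trans φ.compl)⟩, ?_,
    by omega⟩
  exact (by ring : 3 * (4 * s + 3) + 1 = 12 * s + 10) ▸ hminor.map φ.toCopy
end
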